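/- arXiv:2211.14665 — 3 statements merged into one kernel-verified Lean document; each statement's English description precedes it below -/
import Mathlib

section
/- Let k be a subfield of K and T a subgroup of K^× contained in k^×. Assume trdeg(K|k) ≥ 1 and let v be a valuation of K such that 𝒢_{K|T} ⊆ D_v. Then v is the trivial valuation. -/
/- Common definitions: Milnor K-theory of fields (possibly modulo a subgroup of `Kˣ`),
its rationalization, the dual space `𝒢_K` with the relation of alternating pairs,
and valuation-theoretic subspaces, following the paper. -/

set_option synthInstance.maxHeartbeats 400000
set_option maxHeartbeats 1000000

open scoped TensorProduct

namespace Paper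

section Milnor

variable (K : Type) [Field K]

/-- The Steinberg relation together with the relation killing a subgroup `T ≤ Kˣ`; used to
present `K^M_*(K|T) := K^M_*(K)/⟨T⟩` as a quotient of the tensor algebra of the
`ℤ`-module `Kˣ`. -/
inductive MilnorRel (T : Subgroup Kˣ) :
    TensorAlgebra ℤ (Additive Kˣ) → TensorAlgebra ℤ (Additive Kˣ) → Prop
  | steinberg (x y : Kˣ) (h : (x : K) + (y : K) = 1) :
      MilnorRel T (TensorAlgebra.ι ℤ (Additive.ofMul x) * TensorAlgebra.ι ℤ (Additive.ofMul y)) 0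
  | subgroup (x : Kˣ) (h : x ∈ T) :
      MilnorRel T (TensorAlgebra.ι ℤ (Additive.ofMul x)) 0

/-- The Milnor K-theory ring modulo a subgroup: `K^M_*(K|T)`.  For `T = ⊥` this is
Milnor K-theory `K^M_*(K)` itself. -/
abbrev MilnorK (T : Subgroup Kˣ) := RingQuot (MilnorRel K T)

/-- The canonical quotient map from the tensor algebra. -/
noncomputable def milnorMk (T : Subgroup Kˣ) :
    TensorAlgebra ℤ (Additive Kˣ) →+* MilnorK K T :=
  RingQuot.mkRingHom (MilnorRel K T)

/-- The symbol `{x}` in degree one of `K^M_*(K|T)`. -/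
noncomputable def symbol (T : Subgroup Kˣ) (x : Kˣ) : MilnorK K T :=
  milnorMk K T (TensorAlgebra.ι ℤ (Additive.ofMul x))

/-- The degree `n` part of `K^M_*(K|T)`, i.e. the image of the degree `n` part of the
tensor algebra. -/
noncomputable def milnorDeg (T : Subgroup Kˣ) (n : ℕ) : AddSubgroup (MilnorK K T) :=
  AddSubgroup.map (milnorMk K T).toAddMonoidHom
    (Submodule.toAddSubgroup
      ((LinearMap.range (TensorAlgebra.ι ℤ (M := Additive Kˣ))) ^ n))

/-- A ring isomorphism between Milnor K-rings is graded if it maps each degree onto the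
corresponding degree. -/
def IsGradedMilnorIso {K L : Type} [Field K] [Field L] {T : Subgroup Kˣ} {S : Subgroup Lˣ}
    (φ : MilnorK K T ≃+* MilnorK L S) : Prop :=
  ∀ n : ℕ, AddSubgroup.map φ.toRingHom.toAddMonoidHom (milnorDeg K T n) = milnorDeg L S n

/-- `𝒦_*(K|T) := ℚ ⊗_ℤ K^M_*(K|T)`. -/
abbrev MilnorKQ (T : Subgroup Kˣ) := ℚ ⊗[ℤ] MilnorK K T

/-- The symbol `{x}` in degree one of `𝒦_*(K|T)`. -/
noncomputable def symbolQ (T : Subgroup Kˣ) (x : Kˣ) : MilnorKQ K T :=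
  1 ⊗ₜ symbol K T x

/-- The degree `n` part of `𝒦_*(K|T)`. -/
noncomputable def milnorDegQ (T : Subgroup Kˣ) (n : ℕ) : Submodule ℚ (MilnorKQ K T) :=
  Submodule.span ℚ
    ((fun a => (1 : ℚ) ⊗ₜ a) ''
      ((milnorMk K T) ''
        ((LinearMap.range (TensorAlgebra.ι ℤ (M := Additive Kˣ))) ^ n : Submodule ℤ _)))

/-- An isomorphism of the graded `ℚ`-algebras `𝒦_*(K|T)` is graded if it maps each degree
onto the corresponding degree. -/
def IsGradedIsoQ {K L : Type} [Field K] [Field L] {T : Subgroup Kˣ} {S : Subgroup Lˣ}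
    (φ : MilnorKQ K T ≃ₐ[ℚ] MilnorKQ L S) : Prop :=
  ∀ n : ℕ, Submodule.map φ.toLinearMap (milnorDegQ K T n) = milnorDegQ L S n

variable {K}

/-- The ring homomorphism `K^M_*(K|T) → K^M_*(L|S)` induced by a field embedding `σ`
with `σ(T) ⊆ S`. -/
noncomputable def milnorMap {L : Type} [Field L] (σ : K →+* L)
    (T : Subgroup Kˣ) (S : Subgroup Lˣ)
    (h : ∀ x : Kˣ, x ∈ T → Units.map (σ : K →* L) x ∈ S) :
    MilnorK K T →+* MilnorK L S :=
  RingQuot.lift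
    ⟨(TensorAlgebra.lift ℤ
        (((milnorMk L S).toAddMonoidHom.comp
          ((TensorAlgebra.ι ℤ (M := Additive Lˣ)).toAddMonoidHom.comp
            (MonoidHom.toAdditive (Units.map (σ : K →* L))))).toIntLinearMap)).toRingHom,
     by
      rintro a b (⟨x, y, hxy⟩ | ⟨x, hx⟩)
      · simp only [AlgHom.toRingHom_eq_coe, RingHom.coe_coe, map_mul, map_zero,
          TensorAlgebra.lift_ι_apply]
        show milnorMk L S (TensorAlgebra.ι ℤ (Additive.ofMul (Units.map (σ : K →* L) x))) *
          milnorMk L S (TensorAlgebra.ι ℤ (Additive.ofMul (Units.map (σ : K →* L) y))) = 0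
        rw [← map_mul]
        have hsum : ((Units.map (σ : K →* L) x : Lˣ) : L) +
            ((Units.map (σ : K →* L) y : Lˣ) : L) = 1 := by
          simpa using congrArg σ hxy
        exact (RingQuot.mkRingHom_rel
          (MilnorRel.steinberg (T := S) _ _ hsum)).trans (map_zero _)
      · simp only [AlgHom.toRingHom_eq_coe, RingHom.coe_coe, map_zero,
          TensorAlgebra.lift_ι_apply]
        show milnorMk L S (TensorAlgebra.ι ℤ (Additive.ofMul (Units.map (σ : K →* L) x))) = 0
        exact (RingQuot.mkRingHom_rel
          (MilnorRel.subgroup (T := S) _ (h x hx))).trans (map_zero _)⟩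

/-- The induced ring homomorphism `𝒦_*(K|T) → 𝒦_*(L|S)`. -/
noncomputable def milnorMapQ {L : Type} [Field L] (σ : K →+* L)
    (T : Subgroup Kˣ) (S : Subgroup Lˣ)
    (h : ∀ x : Kˣ, x ∈ T → Units.map (σ : K →* L) x ∈ S) :
    MilnorKQ K T →+* MilnorKQ L S :=
  (Algebra.TensorProduct.map (AlgHom.id ℤ ℚ) (milnorMap σ T S h).toIntAlgHom).toRingHom

end Milnor

section Dual

variable (K : Type) [Field K]

/-- `𝒢_K := Hom_ℤ(Kˣ, ℚ)`. -/
abbrev GK := Additive Kˣ →ₗ[ℤ] ℚ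

/-- The weak topology on `𝒢_K`: the topology of pointwise convergence, `ℚ` being discrete. -/
noncomputable def gkTopology : TopologicalSpace (GK K) :=
  TopologicalSpace.induced (fun (f : GK K) (x : Additive Kˣ) => f x)
    (@Pi.topologicalSpace _ _ (fun _ => ⊥))

/-- A subspace of `𝒢_K` is closed if it is closed in the weak topology. -/
def IsClosedSubspace (H : Submodule ℚ (GK K)) : Prop :=
  @IsClosed _ (gkTopology K) (H : Set (GK K))

variable {K}

/-- `f, g ∈ 𝒢_K` form an alternating pair: `ℛ_K(f,g)`. -/
def AltPair (f g : GK K) : Prop :=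
  ∀ x y : Kˣ, (x : K) + (y : K) = 1 →
    f (Additive.ofMul x) * g (Additive.ofMul y) = f (Additive.ofMul y) * g (Additive.ofMul x)

variable (K)

/-- `𝒢_{K|T}`: the functionals vanishing on `T`. -/
def GKrel (T : Subgroup Kˣ) : Submodule ℚ (GK K) where
  carrier := {f | ∀ x ∈ T, f (Additive.ofMul x) = 0}
  add_mem' := by intro f g hf hg x hx; simp [hf x hx, hg x hx]
  zero_mem' := by intro x hx; simp
  smul_mem' := by intro c f hf x hx; simp [hf x hx]

/-- The `ℛ_K`-centralizer `C_K(𝒟)` of a subspace `𝒟 ⊆ 𝒢_K`. -/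
def RCentralizer (D : Submodule ℚ (GK K)) : Submodule ℚ (GK K) where
  carrier := {f | ∀ g ∈ D, AltPair f g}
  add_mem' := by
    intro f1 f2 h1 h2 g hg x y hxy
    have e1 := h1 g hg x y hxy
    have e2 := h2 g hg x y hxy
    simp only [LinearMap.add_apply]
    rw [add_mul, add_mul, e1, e2]
  zero_mem' := by intro g hg x y hxy; simp
  smul_mem' := by
    intro c f hf g hg x y hxy
    simp only [LinearMap.smul_apply, smul_eq_mul]
    rw [mul_assoc, mul_assoc, hf g hg x y hxy]

/-- The `ℛ_K`-centre `Z_K(𝒟)` of a subspace `𝒟 ⊆ 𝒢_K`. -/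
def RCentre (D : Submodule ℚ (GK K)) : Submodule ℚ (GK K) :=
  D ⊓ RCentralizer K D

/-- The orthogonal subgroup `ℋ^⊥ ⊆ Kˣ` of a subspace `ℋ ⊆ 𝒢_K`. -/
def perpSubgroup (H : Submodule ℚ (GK K)) : Subgroup Kˣ where
  carrier := {x | ∀ f ∈ H, f (Additive.ofMul x) = 0}
  one_mem' := by
    intro f hf
    show f (Additive.ofMul 1) = 0
    rw [ofMul_one, map_zero]
  mul_mem' := by
    intro x y hx hy f hf
    have : Additive.ofMul (x * y) = Additive.ofMul x + Additive.ofMul y := rfl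
    rw [this, map_add, hx f hf, hy f hf, add_zero]
  inv_mem' := by
    intro x hx f hf
    have : Additive.ofMul x⁻¹ = -Additive.ofMul x := rfl
    rw [this, map_neg, hx f hf, neg_zero]

/-- `I_v := 𝒢_{K|U_v}` for a valuation (given by its valuation subring `A`). -/
noncomputable def Ival (A : ValuationSubring K) : Submodule ℚ (GK K) := GKrel K A.unitGroup

/-- `D_v := 𝒢_{K|U_v^1}` for a valuation (given by its valuation subring `A`). -/
def Dval (A : ValuationSubring K) : Submodule ℚ (GK K) := GKrel K A.principalUnitGroup

/-- `A` is the valuation ring of the minimal valuation `v_ℐ` attached to a valuative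
subspace `ℐ`: one has `ℐ ⊆ I_v`, and `v` is minimal with this property.  Valuations are
ordered by coarsening (`v ≤ w` iff `v` is a coarsening of `w`, i.e. `𝒪_w ⊆ 𝒪_v`), so
minimality of the valuation means maximality of the valuation subring. -/
def IsMinValuationFor (A : ValuationSubring K) (I : Submodule ℚ (GK K)) : Prop :=
  I ≤ Ival K A ∧ ∀ B : ValuationSubring K, I ≤ Ival K B → B ≤ A

/-- The subgroup of `Kˣ` consisting of the units of a subfield `k ⊆ K`. -/
def subfieldUnits (k : Subfield K) : Subgroup Kˣ where
  carrier := {x | (x : K) ∈ k}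
  one_mem' := k.one_mem
  mul_mem' := by intro a b ha hb; exact k.mul_mem ha hb
  inv_mem' := by
    intro a ha
    show ((a⁻¹ : Kˣ) : K) ∈ k
    rw [Units.val_inv_eq_inv_val]
    exact k.inv_mem ha

/-- The valuation `v` (given by its valuation subring `A`) is `T`-visible:
`I_v ∩ 𝒢_{K|T} = Z_K(D_v ∩ 𝒢_{K|T}) ≠ D_v ∩ 𝒢_{K|T}`, and `v = v_ℐ` for
`ℐ = I_v ∩ 𝒢_{K|T}`. -/
def IsVisible (T : Subgroup Kˣ) (A : ValuationSubring K) : Prop :=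
  Ival K A ⊓ GKrel K T = RCentre K (Dval K A ⊓ GKrel K T) ∧
  Ival K A ⊓ GKrel K T ≠ Dval K A ⊓ GKrel K T ∧
  IsMinValuationFor K A (Ival K A ⊓ GKrel K T)

/-- A subgroup of the value group `vK = Kˣ/U_v` of the valuation corresponding to `A` is
represented by a subgroup `H` of `Kˣ` containing `U_v = A.unitGroup`; `H/U_v` is convex in
`vK` iff whenever `x ∈ H` and `0 ≤ v(y) ≤ v(x)`, also `y ∈ H`. -/
def IsConvexInValueGroup (A : ValuationSubring K) (H : Subgroup Kˣ) : Prop :=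
  A.unitGroup ≤ H ∧
    ∀ x y : Kˣ, x ∈ H → (y : K) ∈ A → ((x : K) * (y : K)⁻¹) ∈ A → y ∈ H

/-- The residue field `kv` of the restriction of the valuation to a subfield `k ⊆ K`,
as a subfield of the residue field `Kv`; it is the set of residues of elements
of `k ∩ 𝒪_v` (which is already closed under the field operations). -/
noncomputable def residueSubfield (A : ValuationSubring K) (k : Subfield K) :
    Subfield (IsLocalRing.ResidueField A) :=
  Subfield.closure ((IsLocalRing.residue A) '' {a : A | (a : K) ∈ k})

end Dual

section KQ

variable (K : Type) [Field K]

/-- A subgroup `T ≤ Kˣ` viewed as a `ℤ`-submodule of `Additive Kˣ`. -/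
def subgroupToSubmodule (T : Subgroup Kˣ) : Submodule ℤ (Additive Kˣ) :=
  AddSubgroup.toIntSubmodule (Subgroup.toAddSubgroup T)

/-- `𝒦_{K|T} := ℚ ⊗_ℤ (Kˣ/T) = 𝒦_1(K|T)`. -/
abbrev KQ (T : Subgroup Kˣ) := ℚ ⊗[ℤ] (Additive Kˣ ⧸ subgroupToSubmodule K T)

/-- The class of `x ∈ Kˣ` in `𝒦_{K|T}`; this is the canonical map `Kˣ → 𝒦_{K|T}`. -/
noncomputable def symbQ (T : Subgroup Kˣ) (x : Kˣ) : KQ K T :=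
  (1 : ℚ) ⊗ₜ Submodule.Quotient.mk (Additive.ofMul x)

/-- The map `Kˣ → 𝒦_1(K|T)`, `x ↦ {x}`, as a `ℤ`-linear map on `Additive Kˣ`. -/
noncomputable def symbolQLinear (T : Subgroup Kˣ) : Additive Kˣ →ₗ[ℤ] MilnorKQ K T :=
  ((Algebra.TensorProduct.includeRight :
      MilnorK K T →ₐ[ℤ] MilnorKQ K T).toLinearMap.toAddMonoidHom.comp
    ((milnorMk K T).toAddMonoidHom.comp
      (TensorAlgebra.ι ℤ (M := Additive Kˣ)).toAddMonoidHom)).toIntLinearMap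

/-- The canonical identification map `𝒦_{K|T} = 𝒦_1(K|T) → 𝒦_*(K|T)` onto degree one. -/
noncomputable def KQtoMilnor (T : Subgroup Kˣ) : KQ K T →ₗ[ℚ] MilnorKQ K T :=
  LinearMap.liftBaseChange ℚ <|
    Submodule.liftQ (subgroupToSubmodule K T) (symbolQLinear K T)
      (by
        intro x hx
        have h2 := RingQuot.mkRingHom_rel (MilnorRel.subgroup (T := T) (Additive.toMul x) hx)
        simp only [LinearMap.mem_ker]
        show (Algebra.TensorProduct.includeRight : MilnorK K T →ₐ[ℤ] MilnorKQ K T)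
          (milnorMk K T (TensorAlgebra.ι ℤ x)) = 0
        rw [show milnorMk K T (TensorAlgebra.ι ℤ x) = 0 from h2.trans (map_zero _), map_zero])

/-- A subspace `ℋ ⊆ 𝒦_{K|T}` is Milnor-closed if for every nonzero `s ∈ ℋ` and every
`t ∈ 𝒦_{K|T}` with `{s,t} = 0` in `𝒦_2(K|T)`, one has `t ∈ ℋ`. -/
def MilnorClosed (T : Subgroup Kˣ) (H : Submodule ℚ (KQ K T)) : Prop :=
  ∀ s ∈ H, s ≠ 0 → ∀ t : KQ K T, KQtoMilnor K T s * KQtoMilnor K T t = 0 → t ∈ H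

/-- The projection `ℚ ⊗_ℤ Kˣ → 𝒦_{K|T}`. -/
noncomputable def KQproj (T : Subgroup Kˣ) : (ℚ ⊗[ℤ] Additive Kˣ) →ₗ[ℚ] KQ K T :=
  LinearMap.baseChange ℚ (subgroupToSubmodule K T).mkQ

lemma KQproj_surjective (T : Subgroup Kˣ) : Function.Surjective (KQproj K T) := by
  intro z
  induction z using TensorProduct.induction_on with
  | zero => exact ⟨0, map_zero _⟩
  | tmul a b =>
      obtain ⟨u, hu⟩ := Submodule.Quotient.mk_surjective (subgroupToSubmodule K T) b
      exact ⟨a ⊗ₜ u, by rw [KQproj, LinearMap.baseChange_tmul, Submodule.mkQ_apply, hu]⟩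
  | add x y hx hy =>
      obtain ⟨x', hx'⟩ := hx
      obtain ⟨y', hy'⟩ := hy
      exact ⟨x' + y', by rw [map_add, hx', hy']⟩

/-- The canonical pairing `𝒦_{K|T} × 𝒢_{K|T} → ℚ`.  It takes the correct value
`⟨s, f⟩` whenever `f` vanishes on `T` (in which case the value is independent of the
choice of preimage), and junk values otherwise. -/
noncomputable def gpair (T : Subgroup Kˣ) (f : GK K) (s : KQ K T) : ℚ :=
  (LinearMap.liftBaseChange ℚ f) (Function.surjInv (KQproj_surjective K T) s)

/-- The image of `𝒦_{L|k}` in `𝒦_{K|k}`, i.e. the subspace spanned by the classes of the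
elements of `Lˣ`. -/
noncomputable def subfieldSpan (k : Subfield K) (L : Subfield K) :
    Submodule ℚ (KQ K (subfieldUnits K k)) :=
  Submodule.span ℚ {s | ∃ x : Kˣ, (x : K) ∈ L ∧ s = symbQ K (subfieldUnits K k) x}

end KQ

section FieldTheory

variable (K : Type) [Field K]

/-- `k` is relatively algebraically closed in `K`. -/
def IsRelAlgClosed (k : Subfield K) : Prop := ∀ x : K, IsAlgebraic k x → x ∈ k

/-- The relative algebraic closure of a subfield `M` in `K` (the set of elements of `K`
algebraic over `M`, which is already a subfield). -/
def relAlgClosure (M : Subfield K) : Subfield K :=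
  Subfield.closure {x : K | IsAlgebraic M x}

/-- The transcendence degree `trdeg(L|k)` of an extension of subfields of `K`:
the supremum of the cardinalities of subsets of `L` that are algebraically independent
over `k`.  `trdeg K k ⊤` is `trdeg(K|k)`. -/
noncomputable def trdeg (k L : Subfield K) : Cardinal :=
  ⨆ s : {s : Set K // s ⊆ (L : Set K) ∧ AlgebraicIndependent k ((↑) : s → K)},
    Cardinal.mk s.1

/-- The perfect closure `k^i` of a subfield `k ⊆ K` inside a perfect closure
`iK : K → Ki` of `K` (with respect to the characteristic exponent `p`): the set of
elements with a `p`-power in `iK(k)` (already a subfield). -/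
def subPerfectClosure {Ki : Type} [Field Ki] (iK : K →+* Ki) (k : Subfield K) (p : ℕ) :
    Subfield Ki :=
  Subfield.closure {x : Ki | ∃ n : ℕ, ∃ a : K, a ∈ k ∧ x ^ p ^ n = iK a}

variable {K}

lemma subfield_units_map {L : Type} [Field L] (σ : K →+* L) (k : Subfield K)
    (l : Subfield L) (h : ∀ x ∈ k, σ x ∈ l) :
    ∀ x : Kˣ, x ∈ subfieldUnits K k → Units.map (σ : K →* L) x ∈ subfieldUnits L l :=
  fun x hx => h x hx

lemma mem_subPerfectClosure {Ki : Type} [Field Ki] (iK : K →+* Ki) (k : Subfield K)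
    (p : ℕ) : ∀ x ∈ k, iK x ∈ subPerfectClosure K iK k p :=
  fun x hx => Subfield.subset_closure ⟨0, x, hx, by simp⟩

lemma bot_units_map {L : Type} [Field L] (σ : K →+* L) (S : Subgroup Lˣ) :
    ∀ x : Kˣ, x ∈ (⊥ : Subgroup Kˣ) → Units.map (σ : K →* L) x ∈ S := by
  intro x hx
  rw [Subgroup.mem_bot] at hx
  subst hx
  rw [map_one]
  exact S.one_mem

end FieldTheory

/-! Since `ℚ` is an injective `ℤ`-module, `𝒢_{K|T} ⊆ D_v` means that every principal unit has a
power in `T ⊆ k`, so every element of the maximal ideal `𝔪_v` is algebraic over `k`. If `v` is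
nontrivial, `𝔪_v` generates `K` as a field (`z = (zπ)/π` for `z ∈ 𝒪_v` and `0 ≠ π ∈ 𝔪_v`, and
`z⁻¹ ∈ 𝔪_v` otherwise), so `K|k` would be algebraic, contradicting `trdeg(K|k) ≥ 1`. -/

end Paper

theorem exists_linearMap_rat_apply_eq_one {M : Type*} [AddCommGroup M] {m : M}
    (hm : ¬IsOfFinAddOrder m) : ∃ f : M →ₗ[ℤ] ℚ, f m = 1 := by
  have hinj : Function.Injective (LinearMap.toSpanSingleton ℤ M m) :=
    injective_zsmul_iff_not_isOfFinAddOrder.mpr hm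
  obtain ⟨f, hf⟩ := (Module.Baer.of_divisible ℚ).extension_property
    (LinearMap.toSpanSingleton ℤ M m) hinj (LinearMap.toSpanSingleton ℤ ℚ 1)
  exact ⟨f, by simpa using LinearMap.congr_fun hf 1⟩

theorem Submodule.exists_nsmul_mem_of_forall_linearMap_rat {M : Type*} [AddCommGroup M]
    (N : Submodule ℤ M) {m : M} (h : ∀ f : M →ₗ[ℤ] ℚ, (∀ x ∈ N, f x = 0) → f m = 0) :
    ∃ n : ℕ, 0 < n ∧ n • m ∈ N := by
  by_contra hm
  obtain ⟨g, hg⟩ := exists_linearMap_rat_apply_eq_one (m := N.mkQ m) fun hfin => hm <| by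
    obtain ⟨n, hn, hnm⟩ := isOfFinAddOrder_iff_nsmul_eq_zero.mp hfin
    exact ⟨n, hn, (Submodule.Quotient.mk_eq_zero N).mp (by simpa using hnm)⟩
  have := h (g ∘ₗ N.mkQ) fun x hx => by simp [(Submodule.Quotient.mk_eq_zero N).mpr hx]
  exact one_ne_zero (hg.symm.trans this)

theorem ValuationSubring.eq_top_of_nonunits_subset {K : Type*} [Field K]
    {A : ValuationSubring K} (hA : A ≠ ⊤) {L : Subfield K} (hL : (A.nonunits : Set K) ⊆ L) :
    L = ⊤ := by
  obtain ⟨x, hx⟩ : ∃ x, x ∉ A := by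
    by_contra! hall
    exact hA (_root_.eq_top_iff.mpr fun y _ => hall y)
  have hπ : x⁻¹ ∈ A.nonunits := A.inv_mem_nonunits_iff.mpr (Or.inr hx)
  refine _root_.eq_top_iff.mpr fun z _ => ?_
  by_cases hz : z ∈ A
  · have hzπ : z * x⁻¹ ∈ A.nonunits := by
      rw [ValuationSubring.mem_nonunits_iff, Valuation.map_mul]
      exact mul_lt_one_of_nonneg_of_lt_one_right ((A.valuation_le_one_iff z).mpr hz)
        zero_le (A.mem_nonunits_iff.mp hπ)
    have hx0 : x ≠ 0 := fun h0 => hx (h0 ▸ A.zero_mem)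
    simpa [hx0] using L.mul_mem (hL hzπ) (L.inv_mem (hL hπ))
  · simpa using L.inv_mem (hL (A.inv_mem_nonunits_iff.mpr (Or.inr hz)))

namespace Paper

theorem exists_pow_mem_of_forall_GKrel_apply_eq_zero {K : Type} [Field K] (T : Subgroup Kˣ)
    {u : Kˣ} (hu : ∀ f ∈ GKrel K T, f (Additive.ofMul u) = 0) :
    ∃ n : ℕ, 0 < n ∧ u ^ n ∈ T :=
  (subgroupToSubmodule K T).exists_nsmul_mem_of_forall_linearMap_rat fun f hf => hu f hf

theorem mem_algebraicClosure_of_mem_nonunits {K : Type} [Field K] {k : Subfield K}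
    {T : Subgroup Kˣ} (hT : T ≤ subfieldUnits K k) {A : ValuationSubring K}
    (h : GKrel K T ≤ Dval K A) {y : K} (hy : y ∈ A.nonunits) :
    y ∈ algebraicClosure k K := by
  have h1y : 1 + y ≠ 0 := fun h0 => by
    rw [eq_neg_of_add_eq_zero_right h0, ValuationSubring.mem_nonunits_iff,
      Valuation.map_neg, Valuation.map_one] at hy
    exact lt_irrefl _ hy
  set u := Units.mk0 (1 + y) h1y
  have hu : u ∈ A.principalUnitGroup := by
    simpa [u, ValuationSubring.mem_principalUnitGroup_iff] using A.mem_nonunits_iff.mp hy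
  obtain ⟨n, hn, hnT⟩ := exists_pow_mem_of_forall_GKrel_apply_eq_zero T fun f hf => h hf u hu
  have hun : (u : K) ^ n ∈ k := by rw [← Units.val_pow_eq_pow_val]; exact hT hnT
  have hu_alg : (u : K) ∈ algebraicClosure k K :=
    mem_algebraicClosure_iff.mpr ((isAlgebraic_algebraMap (⟨_, hun⟩ : k)).of_pow hn)
  simpa [u] using sub_mem hu_alg (one_mem _)

theorem exists_transcendental_of_one_le_trdeg {K : Type} [Field K] {k : Subfield K}
    (htr : 1 ≤ trdeg K k ⊤) : ∃ t : K, Transcendental k t := by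
  by_contra! hc
  have hle : trdeg K k ⊤ ≤ 0 := ciSup_le' fun s =>
    (Cardinal.mk_eq_zero_iff.mpr ⟨fun x => hc x.1 (s.2.2.transcendental x)⟩).le
  exact absurd (htr.trans hle) (by simp)

/-- If `T ≤ k^×` for a subfield `k` with `trdeg(K|k) ≥ 1` and `v` is a
valuation with `𝒢_{K|T} ⊆ D_v`, then `v` is trivial (its valuation ring is all of `K`). -/
theorem trivial_of_GKrel_le_Dval (K : Type) [Field K] (k : Subfield K) (T : Subgroup Kˣ)
    (hT : T ≤ subfieldUnits K k) (htr : 1 ≤ trdeg K k ⊤)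
    (A : ValuationSubring K) (h : GKrel K T ≤ Dval K A) :
    A = ⊤ := by
  by_contra hA
  have halg : (algebraicClosure k K).toSubfield = ⊤ :=
    ValuationSubring.eq_top_of_nonunits_subset hA fun y hy =>
      mem_algebraicClosure_of_mem_nonunits hT h hy
  obtain ⟨t, ht_trans⟩ := exists_transcendental_of_one_le_trdeg htr
  have ht_alg : t ∈ (algebraicClosure k K).toSubfield := halg ▸ Subfield.mem_top t
  exact ht_trans (mem_algebraicClosure_iff.mp ht_alg)

end Paper
end

section
/- Let v be a valuation on a field K. The canonical graded ℚ-algebra map from the exterior algebra ∧^*_ℚ(𝒦_{K|U_v}) to 𝒦_*(K|U_v), given by the identity in degree one, is an isomorphism. Equivalently, ℚ ⊗_ℤ K^M_*(K|U_v) is the exterior algebra over ℚ on ℚ ⊗_ℤ (vK), where vK = K^×/U_v is the value group. -/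
/- Common definitions: Milnor K-theory of fields (possibly modulo a subgroup of `Kˣ`),
its rationalization, the dual space `𝒢_K` with the relation of alternating pairs,
and valuation-theoretic subspaces, following the paper. -/

set_option synthInstance.maxHeartbeats 400000
set_option maxHeartbeats 1000000

open scoped TensorProduct

namespace Paper

/-!
Rationally the symbols of `K^M_*(K|T)` anticommute (from `{x, -x} = 0`) and hence square to
zero, so the identity in degree one extends to `∧^*_ℚ 𝒦_{K|T} → 𝒦_*(K|T)` for every `T`.
For `T = U_v` the Steinberg relation already holds in the exterior algebra: if `x + y = 1`
and neither `x` nor `y` is a unit, then `v(x) = v(y)`, so `x` and `y` have the same class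
and `{x} ∧ {y} = {x} ∧ {x} = 0`. This gives an inverse map, and both composites are the
identity on generators.
-/

theorem _root_.Valuation.map_eq_of_add_eq_one {R Γ₀ : Type*} [Ring R]
    [LinearOrderedCommMonoidWithZero Γ₀] (v : Valuation R Γ₀) {x y : R} (h : x + y = 1)
    (hx : v x ≠ 1) (hy : v y ≠ 1) : v x = v y := by
  obtain rfl : y = 1 - x := eq_sub_of_add_eq' h
  rcases hx.lt_or_gt with hlt | hgt
  · exact absurd (v.map_one_sub_of_lt hlt) hy
  · rw [v.map_sub_eq_of_lt_right (v.map_one ▸ hgt)]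

theorem _root_.LinearMap.apply_mul_self_eq_zero_of_anticomm {F M A : Type*} [Field F]
    [NeZero (2 : F)] [AddCommGroup M] [Module F M] [Ring A] [Algebra F A] (φ : M →ₗ[F] A)
    {s : Set M} (hs : Submodule.span F s = ⊤)
    (h : ∀ a ∈ s, ∀ b ∈ s, φ a * φ b + φ b * φ a = 0) (m : M) : φ m * φ m = 0 := by
  let mul := LinearMap.mul F A
  have hanticomm : (mul + mul.flip).compl₁₂ φ φ = 0 :=
    LinearMap.ext_on hs fun a ha => LinearMap.ext_on hs fun b hb => h a ha b hb
  have h2 : (2 : F) • (φ m * φ m) = 0 := by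
    simpa [two_smul, mul] using LinearMap.congr_fun₂ hanticomm m m
  exact (smul_eq_zero.mp h2).resolve_left two_ne_zero

section MilnorSymbols

variable {K : Type} [Field K] (T : Subgroup Kˣ)

lemma symbol_mul (x y : Kˣ) : symbol K T (x * y) = symbol K T x + symbol K T y := by
  simp only [symbol, ofMul_mul, map_add]

lemma symbol_one : symbol K T 1 = 0 := by
  simp only [symbol, ofMul_one, map_zero]

lemma symbol_mul_symbol_of_add_eq_one {x y : Kˣ} (h : (x : K) + y = 1) :
    symbol K T x * symbol K T y = 0 := by
  rw [symbol, symbol, milnorMk, ← map_mul]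
  exact (RingQuot.mkRingHom_rel (MilnorRel.steinberg x y h)).trans (map_zero _)

lemma symbol_mul_symbol_neg_self (x : Kˣ) : symbol K T x * symbol K T (-x) = 0 := by
  obtain rfl | hx := eq_or_ne x 1
  · rw [symbol_one, zero_mul]
  have hx' : (x : K) ≠ 1 := fun h => hx (Units.ext h)
  let u : Kˣ := Units.mk0 (1 - x) (sub_ne_zero.mpr hx'.symm)
  let w : Kˣ := Units.mk0 (1 - (x : K)⁻¹) (sub_ne_zero.mpr (inv_ne_one.mpr hx').symm)
  have hu : -x * w = u := by
    ext
    simp only [Units.val_neg, Units.val_mul, Units.val_mk0, u, w]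
    field_simp
    ring
  have hw : symbol K T x⁻¹ * symbol K T w = 0 :=
    symbol_mul_symbol_of_add_eq_one T (by simp [w])
  have hw' : symbol K T x * symbol K T w = 0 := calc
    _ = symbol K T x * symbol K T w + symbol K T x⁻¹ * symbol K T w := by rw [hw, add_zero]
    _ = 0 := by rw [← add_mul, ← symbol_mul, mul_inv_cancel, symbol_one, zero_mul]
  have h := symbol_mul_symbol_of_add_eq_one (x := x) (y := u) T (by simp [u])
  rwa [← hu, symbol_mul, mul_add, hw', add_zero] at h

lemma symbol_anticomm (x y : Kˣ) :
    symbol K T x * symbol K T y + symbol K T y * symbol K T x = 0 := by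
  have hneg (z : Kˣ) : symbol K T (-z) = symbol K T (-1) + symbol K T z := by
    rw [← symbol_mul, neg_one_mul]
  have hxy := symbol_mul_symbol_neg_self T (x * y)
  have hx := symbol_mul_symbol_neg_self T x
  have hy := symbol_mul_symbol_neg_self T y
  rw [hneg, symbol_mul] at hxy
  rw [hneg] at hx hy
  calc symbol K T x * symbol K T y + symbol K T y * symbol K T x
      = (symbol K T x + symbol K T y) * (symbol K T (-1) + (symbol K T x + symbol K T y))
        - symbol K T x * (symbol K T (-1) + symbol K T x)
        - symbol K T y * (symbol K T (-1) + symbol K T y) := by noncomm_ring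
    _ = 0 := by rw [hxy, hx, hy, sub_zero, sub_zero]

end MilnorSymbols

namespace MilnorK

variable {K : Type} [Field K] {T : Subgroup Kˣ} {R : Type*} [Semiring R] [Algebra ℤ R]

noncomputable def lift (f : Additive Kˣ →ₗ[ℤ] R) (hT : ∀ x ∈ T, f (Additive.ofMul x) = 0)
    (hf : ∀ x y : Kˣ, (x : K) + y = 1 → f (Additive.ofMul x) * f (Additive.ofMul y) = 0) :
    MilnorK K T →ₐ[ℤ] R :=
  RingQuot.liftAlgHom ℤ ⟨TensorAlgebra.lift ℤ f, by
    rintro _ _ (⟨x, y, h⟩ | ⟨x, hx⟩)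
    · simpa using hf x y h
    · simpa using hT x hx⟩

lemma lift_symbol (f : Additive Kˣ →ₗ[ℤ] R) (hT : ∀ x ∈ T, f (Additive.ofMul x) = 0)
    (hf : ∀ x y : Kˣ, (x : K) + y = 1 → f (Additive.ofMul x) * f (Additive.ofMul y) = 0)
    (x : Kˣ) : lift f hT hf (symbol K T x) = f (Additive.ofMul x) := by
  rw [symbol, milnorMk, ← RingQuot.mkAlgHom_coe ℤ, AlgHom.coe_toRingHom, lift,
    RingQuot.liftAlgHom_mkAlgHom_apply, TensorAlgebra.lift_ι_apply]

lemma algHom_ext {f g : MilnorK K T →ₐ[ℤ] R} (h : ∀ x, f (symbol K T x) = g (symbol K T x)) :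
    f = g :=
  RingQuot.ringQuot_ext' ℤ f g <| TensorAlgebra.hom_ext <| LinearMap.ext fun x => by
    have hx := h x.toMul
    rwa [symbol, milnorMk, ← RingQuot.mkAlgHom_coe ℤ, AlgHom.coe_toRingHom] at hx

end MilnorK

lemma milnorKQ_algHom_ext {K : Type} [Field K] {T : Subgroup Kˣ} {B : Type*} [Ring B]
    [Algebra ℚ B] {f g : MilnorKQ K T →ₐ[ℚ] B}
    (h : ∀ x, f (1 ⊗ₜ symbol K T x) = g (1 ⊗ₜ symbol K T x)) : f = g :=
  Algebra.TensorProduct.ext_ring <| MilnorK.algHom_ext h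

section Rational

variable {K : Type} [Field K] (T : Subgroup Kˣ)

noncomputable def symbQLinear : Additive Kˣ →ₗ[ℤ] KQ K T :=
  (TensorProduct.mk ℤ ℚ _ 1).comp (subgroupToSubmodule K T).mkQ

lemma symbQLinear_ofMul (x : Kˣ) : symbQLinear T (Additive.ofMul x) = symbQ K T x := rfl

lemma symbQ_mul (x y : Kˣ) : symbQ K T (x * y) = symbQ K T x + symbQ K T y := by
  simp only [← symbQLinear_ofMul, ofMul_mul, map_add]

lemma symbQ_inv (x : Kˣ) : symbQ K T x⁻¹ = -symbQ K T x := by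
  simp only [← symbQLinear_ofMul, ofMul_inv, map_neg]

lemma symbQ_eq_zero_of_mem {x : Kˣ} (hx : x ∈ T) : symbQ K T x = 0 := by
  rw [symbQ, (Submodule.Quotient.mk_eq_zero _).mpr hx, TensorProduct.tmul_zero]

lemma span_range_symbQ : Submodule.span ℚ (Set.range (symbQ K T)) = ⊤ := by
  refine Submodule.eq_top_iff'.mpr fun z => ?_
  induction z using TensorProduct.induction_on with
  | zero => exact Submodule.zero_mem _
  | add a b ha hb => exact Submodule.add_mem _ ha hb
  | tmul q m =>
    obtain ⟨u, rfl⟩ := Submodule.Quotient.mk_surjective _ m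
    rw [← mul_one q, ← smul_eq_mul, ← TensorProduct.smul_tmul']
    exact Submodule.smul_mem _ q (Submodule.subset_span ⟨Additive.toMul u, rfl⟩)

lemma KQtoMilnor_symbQ (x : Kˣ) : KQtoMilnor K T (symbQ K T x) = 1 ⊗ₜ symbol K T x :=
  one_smul ℚ ((1 : ℚ) ⊗ₜ[ℤ] symbol K T x : MilnorKQ K T)

lemma KQtoMilnor_mul_self (s : KQ K T) : KQtoMilnor K T s * KQtoMilnor K T s = 0 := by
  refine LinearMap.apply_mul_self_eq_zero_of_anticomm (A := MilnorKQ K T) (KQtoMilnor K T)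
    (span_range_symbQ T) ?_ s
  rintro _ ⟨x, rfl⟩ _ ⟨y, rfl⟩
  rw [KQtoMilnor_symbQ, KQtoMilnor_symbQ, Algebra.TensorProduct.tmul_mul_tmul,
    Algebra.TensorProduct.tmul_mul_tmul, ← TensorProduct.tmul_add, symbol_anticomm,
    TensorProduct.tmul_zero]

noncomputable def exteriorToMilnor : ExteriorAlgebra ℚ (KQ K T) →ₐ[ℚ] MilnorKQ K T :=
  ExteriorAlgebra.lift ℚ ⟨KQtoMilnor K T, KQtoMilnor_mul_self T⟩

lemma exteriorToMilnor_ι (s : KQ K T) :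
    exteriorToMilnor T (ExteriorAlgebra.ι ℚ s) = KQtoMilnor K T s :=
  ExteriorAlgebra.lift_ι_apply _ _ _ _

end Rational

section Valuation

variable {K : Type} [Field K] (A : ValuationSubring K)

lemma symbQ_eq_of_add_eq_one {x y : Kˣ} (h : (x : K) + y = 1) (hx : x ∉ A.unitGroup)
    (hy : y ∉ A.unitGroup) : symbQ K A.unitGroup x = symbQ K A.unitGroup y := by
  rw [A.mem_unitGroup_iff] at hx hy
  have hxy : x * y⁻¹ ∈ A.unitGroup := by
    rw [A.mem_unitGroup_iff, Units.val_mul, Units.val_inv_eq_inv_val, map_mul, map_inv₀,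
      A.valuation.map_eq_of_add_eq_one h hx hy, mul_inv_cancel₀]
    exact (Valuation.ne_zero_iff _).mpr y.ne_zero
  rw [← sub_eq_zero, sub_eq_add_neg, ← symbQ_inv, ← symbQ_mul, symbQ_eq_zero_of_mem _ hxy]

lemma ι_symbQ_mul_ι_symbQ_of_add_eq_one {x y : Kˣ} (h : (x : K) + y = 1) :
    ExteriorAlgebra.ι ℚ (symbQ K A.unitGroup x) * ExteriorAlgebra.ι ℚ (symbQ K A.unitGroup y)
      = 0 := by
  by_cases hx : x ∈ A.unitGroup
  · rw [symbQ_eq_zero_of_mem _ hx, map_zero, zero_mul]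
  by_cases hy : y ∈ A.unitGroup
  · rw [symbQ_eq_zero_of_mem _ hy, map_zero, mul_zero]
  rw [symbQ_eq_of_add_eq_one A h hx hy, ExteriorAlgebra.ι_sq_zero]

noncomputable def milnorToExterior :
    MilnorKQ K A.unitGroup →ₐ[ℚ] ExteriorAlgebra ℚ (KQ K A.unitGroup) :=
  AlgHom.liftEquiv ℤ ℚ _ _ <|
    MilnorK.lift (((ExteriorAlgebra.ι ℚ).restrictScalars ℤ).comp (symbQLinear A.unitGroup))
      (fun x hx => by simp [symbQLinear_ofMul, symbQ_eq_zero_of_mem _ hx])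
      (fun x y h => by
        simpa only [LinearMap.comp_apply, LinearMap.restrictScalars_apply, symbQLinear_ofMul] using
          ι_symbQ_mul_ι_symbQ_of_add_eq_one A h)

lemma milnorToExterior_tmul_symbol (x : Kˣ) :
    milnorToExterior A (1 ⊗ₜ symbol K A.unitGroup x)
      = ExteriorAlgebra.ι ℚ (symbQ K A.unitGroup x) :=
  (one_smul ℚ _).trans (MilnorK.lift_symbol _ _ _ x)

end Valuation

/-- For a valuation `v` on `K`, the canonical graded `ℚ`-algebra map
`∧^*_ℚ(𝒦_{K|U_v}) → 𝒦_*(K|U_v)`, given by the identity in degree one, is an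
isomorphism. -/
theorem exterior_algebra_iso (K : Type) [Field K] (A : ValuationSubring K) :
    ∃ e : ExteriorAlgebra ℚ (KQ K A.unitGroup) ≃ₐ[ℚ] MilnorKQ K A.unitGroup,
      ∀ s : KQ K A.unitGroup, e (ExteriorAlgebra.ι ℚ s) = KQtoMilnor K A.unitGroup s := by
  refine ⟨AlgEquiv.ofAlgHom (exteriorToMilnor A.unitGroup) (milnorToExterior A) ?_ ?_,
    exteriorToMilnor_ι A.unitGroup⟩
  · apply milnorKQ_algHom_ext (B := MilnorKQ K A.unitGroup)
    intro x
    simp [milnorToExterior_tmul_symbol, exteriorToMilnor_ι, KQtoMilnor_symbQ]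
  · apply ExteriorAlgebra.hom_ext
    apply LinearMap.ext_on (span_range_symbQ _)
    rintro _ ⟨x, rfl⟩
    simp [exteriorToMilnor_ι, KQtoMilnor_symbQ, milnorToExterior_tmul_symbol]

end Paper
end

section
/- Let k be a relatively algebraically closed subfield of K. The map sending L ∈ 𝔾(K|k) to the subspace 𝒦_{L|k} ⊆ 𝒦_{K|k} is an order isomorphism from 𝔾(K|k) onto 𝔾_𝒦(K|k); in particular 𝔾_𝒦(K|k) is a complete lattice. -/
/- Common definitions: Milnor K-theory of fields (possibly modulo a subgroup of `Kˣ`),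
its rationalization, the dual space `𝒢_K` with the relation of alternating pairs,
and valuation-theoretic subspaces, following the paper. -/

set_option synthInstance.maxHeartbeats 400000
set_option maxHeartbeats 1000000

open scoped TensorProduct

namespace Paper

/-! If the class of `x ∈ Kˣ` lies in `𝒦_{L|k}`, then its image in `𝒦_{K|L} = ℚ ⊗ Kˣ/Lˣ`
vanishes, so `x ^ n ∈ L` for some `n ≠ 0`; since `L` is relatively algebraically closed in `K`,
this forces `x ∈ L`. Hence `L ↦ 𝒦_{L|k}` reflects inclusions, so it is an order embedding, and
it is onto the geometric subspaces by definition. -/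

lemma one_tmul_eq_zero_iff {A : Type*} [AddCommGroup A] (a : A) :
    (1 : ℚ) ⊗ₜ[ℤ] a = 0 ↔ ∃ n : ℤ, n ≠ 0 ∧ n • a = 0 := by
  have : IsLocalizedModule (nonZeroDivisors ℤ) (TensorProduct.mk ℤ ℚ A 1) :=
    (isLocalizedModule_iff_isBaseChange (nonZeroDivisors ℤ) ℚ _).mpr
      (TensorProduct.isBaseChange ℤ A ℚ)
  refine (IsLocalizedModule.eq_zero_iff (nonZeroDivisors ℤ)
    (TensorProduct.mk ℤ ℚ A 1)).trans ⟨?_, ?_⟩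
  · rintro ⟨s, hs⟩
    exact ⟨s, nonZeroDivisors.coe_ne_zero s, hs⟩
  · rintro ⟨n, hn, hna⟩
    exact ⟨⟨n, mem_nonZeroDivisors_of_ne_zero hn⟩, hna⟩

section Geometric

variable {K : Type} [Field K]

lemma symbQ_eq_zero_iff (T : Subgroup Kˣ) (x : Kˣ) :
    symbQ K T x = 0 ↔ ∃ n : ℤ, n ≠ 0 ∧ x ^ n ∈ T := by
  simp only [symbQ, one_tmul_eq_zero_iff, ← Submodule.Quotient.mk_smul,
    Submodule.Quotient.mk_eq_zero]
  rfl

noncomputable def KQfactor {T S : Subgroup Kˣ} (h : T ≤ S) : KQ K T →ₗ[ℚ] KQ K S :=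
  LinearMap.baseChange ℚ (Submodule.factor (p := subgroupToSubmodule K T)
    (p' := subgroupToSubmodule K S) h)

lemma KQfactor_symbQ {T S : Subgroup Kˣ} (h : T ≤ S) (x : Kˣ) :
    KQfactor h (symbQ K T x) = symbQ K S x :=
  rfl

@[simp]
lemma mem_subfieldUnits {k : Subfield K} {x : Kˣ} : x ∈ subfieldUnits K k ↔ (x : K) ∈ k :=
  Iff.rfl

lemma subfieldUnits_mono {k L : Subfield K} (h : k ≤ L) :
    subfieldUnits K k ≤ subfieldUnits K L :=
  fun _ hx => h hx

lemma subfieldSpan_le_ker_KQfactor {k L : Subfield K} (h : k ≤ L) :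
    subfieldSpan K k L ≤ LinearMap.ker (KQfactor (subfieldUnits_mono h)) := by
  refine Submodule.span_le.mpr ?_
  rintro _ ⟨x, hx, rfl⟩
  rw [SetLike.mem_coe, LinearMap.mem_ker, KQfactor_symbQ, symbQ_eq_zero_iff]
  exact ⟨1, one_ne_zero, by simpa using hx⟩

lemma IsRelAlgClosed.mem_of_zpow_mem {L : Subfield K} (hL : IsRelAlgClosed K L) {x : K}
    {n : ℤ} (hn : n ≠ 0) (hx : x ^ n ∈ L) : x ∈ L := by
  have hpow : x ^ n.natAbs ∈ L := by
    rcases Int.natAbs_eq n with h | h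
    · rwa [h, zpow_natCast] at hx
    · rw [h, zpow_neg, zpow_natCast] at hx
      simpa using L.inv_mem hx
  exact hL x (IsAlgebraic.of_pow (Int.natAbs_pos.mpr hn)
    (isAlgebraic_algebraMap (⟨_, hpow⟩ : L)))

lemma symbQ_mem_subfieldSpan_iff {k L : Subfield K} (hkL : k ≤ L)
    (hL : IsRelAlgClosed K L) (x : Kˣ) :
    symbQ K (subfieldUnits K k) x ∈ subfieldSpan K k L ↔ (x : K) ∈ L := by
  refine ⟨fun h => ?_, fun h => Submodule.subset_span ⟨x, h, rfl⟩⟩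
  obtain ⟨n, hn, hxn⟩ := (symbQ_eq_zero_iff _ x).mp (subfieldSpan_le_ker_KQfactor hkL h)
  exact hL.mem_of_zpow_mem hn (by simpa using hxn)

lemma subfieldSpan_mono (k : Subfield K) {L₁ L₂ : Subfield K} (h : L₁ ≤ L₂) :
    subfieldSpan K k L₁ ≤ subfieldSpan K k L₂ :=
  Submodule.span_mono fun _ ⟨x, hx, hs⟩ => ⟨x, h hx, hs⟩

lemma subfieldSpan_le_subfieldSpan_iff {k L₁ L₂ : Subfield K} (hkL₂ : k ≤ L₂)
    (hL₂ : IsRelAlgClosed K L₂) :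
    subfieldSpan K k L₁ ≤ subfieldSpan K k L₂ ↔ L₁ ≤ L₂ := by
  refine ⟨fun h x hx => ?_, subfieldSpan_mono k⟩
  by_cases hx0 : x = 0
  · exact hx0 ▸ L₂.zero_mem
  have hmem := h (Submodule.subset_span ⟨Units.mk0 x hx0, hx, rfl⟩)
  exact (symbQ_mem_subfieldSpan_iff hkL₂ hL₂ (Units.mk0 x hx0)).mp hmem

end Geometric

theorem geometric_lattice_iso_general (K : Type) [Field K] (k : Subfield K) :
    Function.Bijective
      (fun L : {L : Subfield K // k ≤ L ∧ IsRelAlgClosed K L} =>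
        (⟨subfieldSpan K k L.1, L.1, L.2.1, L.2.2, rfl⟩ :
          {H : Submodule ℚ (KQ K (subfieldUnits K k)) //
            ∃ L' : Subfield K, k ≤ L' ∧ IsRelAlgClosed K L' ∧ H = subfieldSpan K k L'})) ∧
    ∀ L1 L2 : {L : Subfield K // k ≤ L ∧ IsRelAlgClosed K L},
      L1 ≤ L2 ↔ subfieldSpan K k L1.1 ≤ subfieldSpan K k L2.1 := by
  have le_iff (L1 L2 : {L : Subfield K // k ≤ L ∧ IsRelAlgClosed K L}) :
      L1 ≤ L2 ↔ subfieldSpan K k L1.1 ≤ subfieldSpan K k L2.1 :=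
    (subfieldSpan_le_subfieldSpan_iff L2.2.1 L2.2.2).symm
  refine ⟨⟨fun L1 L2 h => ?_, ?_⟩, le_iff⟩
  · have hspan : subfieldSpan K k L1.1 = subfieldSpan K k L2.1 := congrArg Subtype.val h
    exact le_antisymm ((le_iff L1 L2).mpr hspan.le) ((le_iff L2 L1).mpr hspan.ge)
  · rintro ⟨H, L, hkL, hL, rfl⟩
    exact ⟨⟨L, hkL, hL⟩, rfl⟩

/-- For a relatively algebraically closed subfield `k ⊆ K`, the map
`L ↦ 𝒦_{L|k}` is an order isomorphism from the lattice `𝔾(K|k)` of relatively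
algebraically closed subextensions onto the poset `𝔾_𝒦(K|k)` of geometric subspaces of
`𝒦_{K|k}`. -/
theorem geometric_lattice_iso (K : Type) [Field K] (k : Subfield K)
    (hk : IsRelAlgClosed K k) :
    Function.Bijective
      (fun L : {L : Subfield K // k ≤ L ∧ IsRelAlgClosed K L} =>
        (⟨subfieldSpan K k L.1, L.1, L.2.1, L.2.2, rfl⟩ :
          {H : Submodule ℚ (KQ K (subfieldUnits K k)) //
            ∃ L' : Subfield K, k ≤ L' ∧ IsRelAlgClosed K L' ∧ H = subfieldSpan K k L'})) ∧
    ∀ L1 L2 : {L : Subfield K // k ≤ L ∧ IsRelAlgClosed K L},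
      L1 ≤ L2 ↔ subfieldSpan K k L1.1 ≤ subfieldSpan K k L2.1 :=
  geometric_lattice_iso_general K k

end Paper
end
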